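/- Criterion answering Goss's question: let F be a field of characteristic p > 0, complete with respect to a non-Archimedean norm. Let H be an additive generator with a two-sided composition inverse Hinv which is also an additive generator. Let u : ℕ → F be a null sequence with u_0 = 1, define v_k := ∑_{m≥0} (coeff_m(Hinv^k))·u_m, and assume ‖v_1‖ < 1. Then the naive (geometric) flow of v_1 equals the flow of v — i.e., Flow((v_1^k)_{k≥0}, P) = Flow(v, P) for every bounded P ∈ F⟦T⟧ — if and only if u is geometric, i.e., u_k = u_1^k for all k ≥ 0. -/

import Mathlib

open Filter

/-- Composition `P ∘ H` of power series, for `H` with zero constant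
coefficient. -/
noncomputable def psComp {F : Type*} [Field F] (P H : PowerSeries F) : PowerSeries F :=
  PowerSeries.mk fun n => ∑ k ∈ Finset.range (n + 1),
    PowerSeries.coeff k P * PowerSeries.coeff n (H ^ k)

noncomputable def psFlow {F : Type*} [NormedField F] (u : ℕ → F) (P : PowerSeries F) :
    PowerSeries F :=
  PowerSeries.mk fun n =>
    ∑' k : ℕ, ((n + k).choose k : F) * u k * PowerSeries.coeff (n + k) P

def IsAddGen {F : Type*} [NormedField F] (p : ℕ) (H : PowerSeries F) : Prop :=
  PowerSeries.constantCoeff H = 0 ∧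
    (∀ n : ℕ, (¬ ∃ m : ℕ, n = p ^ m) → PowerSeries.coeff n H = 0) ∧
    (∀ n : ℕ, ‖PowerSeries.coeff n H‖ ≤ 1) ∧ ‖PowerSeries.coeff 1 H‖ = 1

/-!
Choosing `P = X ^ N` and comparing constant coefficients, equality of the two flows says exactly
that `v` is geometric, `v_N = v_1 ^ N`. Since `H ∘ Hinv = X`, the transform `u ↦ v` is inverted
by `u_j = ∑_k coeff_k (H ^ j) · v_k` (a Fubini argument, legitimate because in a complete
ultrametric field every family tending to zero is summable). Evaluation at a point of norm `< 1`
is multiplicative on power series with coefficients in the unit ball, so a geometric `v` gives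
`u_j = H(v_1) ^ j`, and symmetrically a geometric `u` (necessarily with `‖u_1‖ < 1`, as `u` is
null) gives `v_k = Hinv(u_1) ^ k`.
-/

open PowerSeries

lemma PowerSeries.coeff_pow_eq_zero_of_lt {R : Type*} [CommSemiring R] {a : PowerSeries R}
    (ha : constantCoeff a = 0) {n k : ℕ} (h : n < k) : coeff n (a ^ k) = 0 :=
  X_pow_dvd_iff.mp (pow_dvd_pow_of_dvd (X_dvd_iff.mpr ha) k) n h

section Composition

variable {F : Type*} [Field F] {a : PowerSeries F}

lemma psComp_eq_subst (ha : constantCoeff a = 0) (P : PowerSeries F) :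
    psComp P a = P.subst a := by
  ext n
  rw [coeff_subst' (HasSubst.of_constantCoeff_zero' ha), psComp, coeff_mk,
    finsum_eq_sum_of_support_subset _ (s := Finset.range (n + 1))]
  · simp only [smul_eq_mul]
  · intro k hk
    simp only [Finset.coe_range, Set.mem_Iio]
    by_contra hkn
    simp [coeff_pow_eq_zero_of_lt ha (by omega : n < k)] at hk

lemma psComp_pow (ha : constantCoeff a = 0) (P : PowerSeries F) (j : ℕ) :
    psComp (P ^ j) a = psComp P a ^ j := by
  simp only [psComp_eq_subst ha, subst_pow (HasSubst.of_constantCoeff_zero' ha)]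

end Composition

section Norm

variable {R : Type*} [NormedRing R] [IsUltrametricDist R]

lemma norm_coeff_mul_le_one {P Q : PowerSeries R} (hP : ∀ n, ‖coeff n P‖ ≤ 1)
    (hQ : ∀ n, ‖coeff n Q‖ ≤ 1) (n : ℕ) : ‖coeff n (P * Q)‖ ≤ 1 := by
  rw [coeff_mul]
  refine IsUltrametricDist.norm_sum_le_of_forall_le_of_nonneg zero_le_one fun i _ => ?_
  exact (norm_mul_le _ _).trans (mul_le_one₀ (hP _) (norm_nonneg _) (hQ _))

lemma norm_coeff_pow_le_one [NormOneClass R] {P : PowerSeries R} (hP : ∀ n, ‖coeff n P‖ ≤ 1)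
    (k n : ℕ) : ‖coeff n (P ^ k)‖ ≤ 1 := by
  induction k generalizing n with
  | zero => rw [pow_zero, coeff_one]; split_ifs <;> simp
  | succ k ih => rw [pow_succ]; exact norm_coeff_mul_le_one ih hP n

end Norm

section Evaluation

variable {R : Type*} [NormedCommRing R]

noncomputable def psEval (x : R) (P : PowerSeries R) : R := ∑' n, coeff n P * x ^ n

lemma summable_norm_coeff_mul_pow [NormOneClass R] {x : R} (hx : ‖x‖ < 1) {P : PowerSeries R}
    (hP : ∀ n, ‖coeff n P‖ ≤ 1) : Summable fun n => ‖coeff n P * x ^ n‖ := by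
  refine .of_nonneg_of_le (fun _ => norm_nonneg _) (fun n => ?_)
    (summable_geometric_of_lt_one (norm_nonneg x) hx)
  calc ‖coeff n P * x ^ n‖ ≤ ‖coeff n P‖ * ‖x‖ ^ n :=
        (norm_mul_le _ _).trans (by gcongr; exact norm_pow_le _ _)
  _ ≤ ‖x‖ ^ n := mul_le_of_le_one_left (by positivity) (hP n)

lemma psEval_one (x : R) : psEval x 1 = 1 := by
  rw [psEval, tsum_eq_single 0 fun n hn => by rw [coeff_one, if_neg hn, zero_mul]]
  simp

variable [NormOneClass R] [CompleteSpace R]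

lemma psEval_mul {x : R} (hx : ‖x‖ < 1) {P Q : PowerSeries R}
    (hP : ∀ n, ‖coeff n P‖ ≤ 1) (hQ : ∀ n, ‖coeff n Q‖ ≤ 1) :
    psEval x (P * Q) = psEval x P * psEval x Q := by
  rw [psEval, psEval, psEval, tsum_mul_tsum_eq_tsum_sum_antidiagonal_of_summable_norm
    (summable_norm_coeff_mul_pow hx hP) (summable_norm_coeff_mul_pow hx hQ)]
  refine tsum_congr fun n => ?_
  rw [coeff_mul, Finset.sum_mul]
  refine Finset.sum_congr rfl fun i hi => ?_
  rw [← Finset.HasAntidiagonal.mem_antidiagonal.mp hi, pow_add]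
  ring

lemma psEval_pow [IsUltrametricDist R] {x : R} (hx : ‖x‖ < 1) {P : PowerSeries R}
    (hP : ∀ n, ‖coeff n P‖ ≤ 1) (k : ℕ) : psEval x (P ^ k) = psEval x P ^ k := by
  induction k with
  | zero => simp [psEval_one]
  | succ k ih => rw [pow_succ, psEval_mul hx (norm_coeff_pow_le_one hP k) hP, ih, pow_succ]

lemma tsum_coeff_pow_mul_of_geometric [IsUltrametricDist R] {x : R} (hx : ‖x‖ < 1)
    {P : PowerSeries R} (hP : ∀ n, ‖coeff n P‖ ≤ 1) {u : ℕ → R} (hu : ∀ m, u m = x ^ m)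
    (k : ℕ) : ∑' m, coeff m (P ^ k) * u m = psEval x P ^ k := by
  rw [← psEval_pow hx hP, psEval]
  simp only [hu]

end Evaluation

lemma tendsto_cofinite_zero_of_triangular_of_norm_le {E : Type*} [SeminormedAddCommGroup E]
    {g : ℕ × ℕ → E} {b : ℕ → ℝ} (hb : Tendsto b atTop (nhds 0))
    (hg : ∀ k m, ‖g (k, m)‖ ≤ b m) (hg0 : ∀ k m, m < k → g (k, m) = 0) :
    Tendsto g cofinite (nhds 0) := by
  rw [Metric.tendsto_nhds]
  intro ε hε
  obtain ⟨N, hN⟩ := eventually_atTop.mp (hb.eventually (gt_mem_nhds hε))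
  rw [eventually_cofinite]
  refine ((Set.finite_Iio N).prod (Set.finite_Iio N)).subset fun ⟨k, m⟩ hkm => ?_
  simp only [Set.mem_ofPred_eq, dist_zero_right, not_lt] at hkm
  have hm : m < N := by
    by_contra h
    exact (hkm.trans (hg k m)).not_gt (hN m (not_lt.mp h))
  have hk : k ≤ m := by
    by_contra h
    rw [hg0 k m (not_le.mp h), norm_zero] at hkm
    exact hkm.not_gt hε
  exact ⟨hk.trans_lt hm, hm⟩

section Inversion

variable {F : Type*} [NormedField F] [CompleteSpace F] [IsUltrametricDist F]

lemma tsum_coeff_mul_tsum_coeff_pow_mul {a : PowerSeries F} (ha0 : constantCoeff a = 0)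
    (ha : ∀ n, ‖coeff n a‖ ≤ 1) {P : PowerSeries F} (hP : ∀ n, ‖coeff n P‖ ≤ 1)
    {u : ℕ → F} (hu : Tendsto u atTop (nhds 0)) :
    ∑' k, coeff k P * ∑' m, coeff m (a ^ k) * u m = ∑' m, coeff m (psComp P a) * u m := by
  set g : ℕ × ℕ → F := fun x => coeff x.1 P * (coeff x.2 (a ^ x.1) * u x.2)
  have hg0 : ∀ k m, m < k → g (k, m) = 0 := fun k m h => by
    simp [g, coeff_pow_eq_zero_of_lt ha0 h]
  have hg : ∀ k m, ‖g (k, m)‖ ≤ ‖u m‖ := fun k m => by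
    calc ‖g (k, m)‖ = ‖coeff k P‖ * (‖coeff m (a ^ k)‖ * ‖u m‖) := by simp only [g, norm_mul]
      _ ≤ 1 * (1 * ‖u m‖) := by gcongr; exacts [hP k, norm_coeff_pow_le_one ha k m]
      _ = ‖u m‖ := by ring
  have hsum : Summable g := NonarchimedeanAddGroup.summable_of_tendsto_cofinite_zero
    (tendsto_cofinite_zero_of_triangular_of_norm_le (tendsto_zero_iff_norm_tendsto_zero.mp hu) hg hg0)
  have hcol : ∀ m, ∑' k, g (k, m) = coeff m (psComp P a) * u m := fun m => by
    rw [tsum_eq_sum (s := Finset.range (m + 1)) fun k hk =>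
      hg0 k m (by simpa [Nat.lt_succ_iff] using hk), psComp, coeff_mk, Finset.sum_mul]
    exact Finset.sum_congr rfl fun k _ => (mul_assoc _ _ _).symm
  calc ∑' k, coeff k P * ∑' m, coeff m (a ^ k) * u m = ∑' k, ∑' m, g (k, m) :=
        tsum_congr fun k => tsum_mul_left.symm
    _ = ∑' m, ∑' k, g (k, m) := (Summable.tsum_comm (f := fun k m => g (k, m)) hsum).symm
    _ = ∑' m, coeff m (psComp P a) * u m := tsum_congr hcol

lemma eq_tsum_coeff_pow_mul_tsum_of_psComp_eq_X {H Hinv : PowerSeries F}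
    (hH : ∀ n, ‖coeff n H‖ ≤ 1) (hHinv0 : constantCoeff Hinv = 0)
    (hHinv : ∀ n, ‖coeff n Hinv‖ ≤ 1) (hinv : psComp H Hinv = X)
    {u : ℕ → F} (hu : Tendsto u atTop (nhds 0)) (j : ℕ) :
    u j = ∑' k, coeff k (H ^ j) * ∑' m, coeff m (Hinv ^ k) * u m := by
  rw [tsum_coeff_mul_tsum_coeff_pow_mul hHinv0 hHinv (norm_coeff_pow_le_one hH j) hu,
    psComp_pow hHinv0, hinv, tsum_eq_single j fun m hm => by rw [coeff_X_pow, if_neg hm, zero_mul]]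
  simp

end Inversion

lemma coeff_zero_psFlow_X_pow {F : Type*} [NormedField F] (w : ℕ → F) (N : ℕ) :
    coeff 0 (psFlow w (X ^ N)) = w N := by
  rw [psFlow, coeff_mk, tsum_eq_single N fun k hk => by rw [zero_add, coeff_X_pow, if_neg hk,
    mul_zero]]
  simp

theorem goss_question_criterion_general {F : Type*} [NormedField F] [CompleteSpace F]
    (hna : ∀ x y : F, ‖x + y‖ ≤ max ‖x‖ ‖y‖)
    (p : ℕ)
    (H Hinv : PowerSeries F) (hH : IsAddGen p H) (hHinv : IsAddGen p Hinv)
    (hinv₂ : psComp H Hinv = PowerSeries.X)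
    (u : ℕ → F) (hu : Tendsto u atTop (nhds 0))
    (v : ℕ → F)
    (hv : ∀ k : ℕ, v k = ∑' m : ℕ, PowerSeries.coeff m (Hinv ^ k) * u m)
    (hv1 : ‖v 1‖ < 1) :
    (∀ P : PowerSeries F,
        (∃ c : ℝ, 0 < c ∧ ∀ n : ℕ, ‖PowerSeries.coeff n P‖ < c) →
        psFlow (fun k => v 1 ^ k) P = psFlow v P) ↔
      (∀ k : ℕ, u k = u 1 ^ k) := by
  have := IsUltrametricDist.isUltrametricDist_of_isNonarchimedean_norm hna
  obtain ⟨-, -, hH1, -⟩ := hH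
  obtain ⟨hHinv0, -, hHinv1, -⟩ := hHinv
  constructor
  · intro hflow
    have hv_geom (N : ℕ) : v N = v 1 ^ N := by
      have hX : ∃ c : ℝ, 0 < c ∧ ∀ n, ‖coeff n (X ^ N : PowerSeries F)‖ < c :=
        ⟨2, two_pos, fun n => by rw [coeff_X_pow]; split_ifs <;> norm_num⟩
      simpa only [coeff_zero_psFlow_X_pow] using (congrArg (coeff 0) (hflow _ hX)).symm
    have hu_geom (j : ℕ) : u j = psEval (v 1) H ^ j := by
      rw [eq_tsum_coeff_pow_mul_tsum_of_psComp_eq_X hH1 hHinv0 hHinv1 hinv₂ hu j]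
      simp only [← hv]
      exact tsum_coeff_pow_mul_of_geometric hv1 hH1 hv_geom j
    intro k
    rw [hu_geom k, hu_geom 1, pow_one]
  · intro hu_geom
    have hu1 : ‖u 1‖ < 1 :=
      tendsto_pow_atTop_nhds_zero_iff_norm_lt_one.mp (hu.congr hu_geom)
    have hv_geom (k : ℕ) : v k = v 1 ^ k := by
      rw [hv, hv 1, tsum_coeff_pow_mul_of_geometric hu1 hHinv1 hu_geom,
        tsum_coeff_pow_mul_of_geometric hu1 hHinv1 hu_geom, pow_one]
    intro P _
    rw [show (fun k => v 1 ^ k) = v from funext fun k => (hv_geom k).symm]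

/-- Criterion answering Goss's question: the naive (geometric) flow of `v₁`
equals the flow of the dual sequence `v` on all bounded power series if and
only if the original sequence `u` is geometric, i.e. `u_k = u_1^k`. -/
theorem goss_question_criterion {F : Type*} [NormedField F] [CompleteSpace F]
    (hna : ∀ x y : F, ‖x + y‖ ≤ max ‖x‖ ‖y‖)
    (p : ℕ) (hp : p.Prime) (hchar : CharP F p)
    (H Hinv : PowerSeries F) (hH : IsAddGen p H) (hHinv : IsAddGen p Hinv)
    (hinv₁ : psComp Hinv H = PowerSeries.X) (hinv₂ : psComp H Hinv = PowerSeries.X)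
    (u : ℕ → F) (hu : Tendsto u atTop (nhds 0)) (hu0 : u 0 = 1)
    (v : ℕ → F)
    (hv : ∀ k : ℕ, v k = ∑' m : ℕ, PowerSeries.coeff m (Hinv ^ k) * u m)
    (hv1 : ‖v 1‖ < 1) :
    (∀ P : PowerSeries F,
        (∃ c : ℝ, 0 < c ∧ ∀ n : ℕ, ‖PowerSeries.coeff n P‖ < c) →
        psFlow (fun k => v 1 ^ k) P = psFlow v P) ↔
      (∀ k : ℕ, u k = u 1 ^ k) :=
  goss_question_criterion_general hna p H Hinv hH hHinv hinv₂ u hu v hv hv1
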